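/- arXiv:0901.2370 — 2 statements merged into one kernel-verified Lean document; each statement's English description precedes it below -/
import Mathlib

section
/- Let C be the linear code over GF(2) of length N = 2^n whose codewords are all vectors u·G_2^{⊗n} where u ranges over vectors supported on a nonempty set I ⊆ {0,...,N-1} (i.e., u_i = 0 for i ∉ I). Then the minimum distance of C equals min_{i ∈ I} 2^{wt(i)}. -/
def G2 : Matrix (Fin 2) (Fin 2) (ZMod 2) := !![1, 0; 1, 1]

def pow2Equiv (n : ℕ) : Fin 2 × Fin (2^n) ≃ Fin (2^(n+1)) :=
  finProdFinEquiv.trans (finCongr (by rw [pow_succ, Nat.mul_comm]))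

/-- The n-th Kronecker power of G₂ = [[1,0],[1,1]] over GF(2). -/
def G2pow : (n : ℕ) → Matrix (Fin (2^n)) (Fin (2^n)) (ZMod 2)
  | 0 => 1
  | n+1 => Matrix.reindex (pow2Equiv n) (pow2Equiv n) (Matrix.kroneckerMap (· * ·) G2 (G2pow n))

/-- Number of ones in the binary expansion. -/
def wt (i : ℕ) : ℕ := (Nat.digits 2 i).count 1

/-- Hamming weight of a binary vector. -/
def hw {N : ℕ} (v : Fin N → ZMod 2) : ℕ := (Finset.univ.filter (fun j => v j ≠ 0)).card

/-!
Split a message `u` along the top bit of the index into halves `u₀, u₁`. Since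
`G2pow (n+1) = G₂ ⊗ G2pow n`, the codeword `u ᵥ* G2pow (n+1)` has halves
`(u₀ + u₁) ᵥ* G2pow n` and `u₁ ᵥ* G2pow n` (Plotkin's `(a + b | b)` construction), and row `i`
has weight `2 ^ wt i` by the same recursion. For the lower bound one finds, by induction on `n`,
an index `i` in the support of `u` with `2 ^ wt i` at most the weight of the codeword: if `u₀ ≠ 0`,
the triangle inequality bounds the weight below by that of `u₀ ᵥ* G2pow n`, whose index serves;
if `u₀ = 0`, both halves equal `u₁ ᵥ* G2pow n`, so the weight doubles while setting the top bit
raises `wt` by one.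
-/

section Hamming

variable {α ι κ β : Type*} [Fintype α] [Fintype ι] [Fintype κ] [DecidableEq β]

theorem hammingNorm_neg [AddGroup β] (x : ι → β) : hammingNorm (-x) = hammingNorm x := by
  simp [hammingNorm]

theorem hammingNorm_add_le [AddGroup β] (x y : ι → β) :
    hammingNorm (x + y) ≤ hammingNorm x + hammingNorm y := by
  have h := hammingDist_triangle (-x) 0 y
  rwa [hammingDist_eq_hammingNorm, neg_neg, hammingDist_zero_right, hammingDist_zero_left,
    hammingNorm_neg] at h

theorem hammingNorm_comp_equiv [Zero β] (v : κ → β) (e : ι ≃ κ) :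
    hammingNorm (v ∘ e) = hammingNorm v := by
  simp only [hammingNorm, Finset.card_filter]
  exact e.sum_comp fun k => if v k ≠ 0 then 1 else 0

theorem hammingNorm_prod_eq_sum [Zero β] (v : α × ι → β) :
    hammingNorm v = ∑ a, hammingNorm fun i => v (a, i) := by
  simp only [hammingNorm, Finset.card_filter, Fintype.sum_prod_type]

theorem hammingNorm_kronecker [MulZeroClass β] [NoZeroDivisors β] (a : α → β) (v : ι → β) :
    hammingNorm (fun p : α × ι => a p.1 * v p.2) = hammingNorm a * hammingNorm v := by
  classical
  simp only [hammingNorm, ← Finset.card_product, ← Finset.filter_product, ne_eq, mul_eq_zero,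
    not_or]
  rfl

end Hamming

theorem wt_add_two_mul {r : ℕ} (hr : r < 2) (k : ℕ) : wt (r + 2 * k) = r + wt k := by
  rcases Nat.eq_zero_or_pos (r + k) with h | h
  · obtain ⟨rfl, rfl⟩ : r = 0 ∧ k = 0 := by omega
    rfl
  · rw [wt, Nat.digits_add 2 one_lt_two r k hr (by omega)]
    interval_cases r <;> simp [wt, add_comm]

theorem wt_of_lt_two {r : ℕ} (hr : r < 2) : wt r = r := by
  simpa [wt] using wt_add_two_mul hr 0

theorem wt_add_two_pow_mul {n i : ℕ} (hi : i < 2 ^ n) (m : ℕ) :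
    wt (i + 2 ^ n * m) = wt i + wt m := by
  induction n generalizing i with
  | zero =>
    obtain rfl : i = 0 := by omega
    simp [wt]
  | succ n ih =>
    have hsplit := Nat.mod_add_div i 2
    have hq : i / 2 < 2 ^ n := by omega
    have hr : i % 2 < 2 := Nat.mod_lt i two_pos
    have : i + 2 ^ (n + 1) * m = i % 2 + 2 * (i / 2 + 2 ^ n * m) := by rw [pow_succ]; ring_nf; omega
    conv_rhs => rw [← hsplit, wt_add_two_mul hr]
    rw [this, wt_add_two_mul hr, ih hq, add_assoc]

theorem hw_eq_hammingNorm {N : ℕ} (v : Fin N → ZMod 2) : hw v = hammingNorm v := rfl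

open Matrix

section PolarTransform

variable {n : ℕ}

theorem pow2Equiv_val (b : Fin 2) (i : Fin (2 ^ n)) :
    (pow2Equiv n (b, i) : ℕ) = i + 2 ^ n * b := by
  simp [pow2Equiv, finProdFinEquiv]

theorem wt_pow2Equiv (b : Fin 2) (i : Fin (2 ^ n)) :
    wt (pow2Equiv n (b, i)) = wt i + b := by
  rw [pow2Equiv_val, wt_add_two_pow_mul i.isLt, wt_of_lt_two b.isLt]

theorem G2pow_succ_apply (b c : Fin 2) (i j : Fin (2 ^ n)) :
    G2pow (n + 1) (pow2Equiv n (b, i)) (pow2Equiv n (c, j)) = G2 b c * G2pow n i j := by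
  simp [G2pow]

theorem hammingNorm_G2 (b : Fin 2) : hammingNorm (G2 b) = 2 ^ (b : ℕ) := by
  fin_cases b <;> decide

theorem hammingNorm_G2pow (i : Fin (2 ^ n)) : hammingNorm (G2pow n i) = 2 ^ wt i := by
  induction n with
  | zero =>
    obtain rfl : i = 0 := Fin.ext (by omega)
    decide
  | succ n ih =>
    obtain ⟨⟨b, i⟩, rfl⟩ := (pow2Equiv n).surjective i
    have hrow : G2pow (n + 1) (pow2Equiv n (b, i)) ∘ pow2Equiv n =
        fun p => G2 b p.1 * G2pow n i p.2 := by
      funext ⟨c, j⟩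
      exact G2pow_succ_apply b c i j
    rw [← hammingNorm_comp_equiv _ (pow2Equiv n), hrow, hammingNorm_kronecker, hammingNorm_G2, ih,
      wt_pow2Equiv, pow_add, mul_comm]

def pow2Half {R : Type*} (b : Fin 2) (v : Fin (2 ^ (n + 1)) → R) : Fin (2 ^ n) → R :=
  fun j => v (pow2Equiv n (b, j))

theorem eq_zero_of_pow2Half_eq_zero {R : Type*} [Zero R] {v : Fin (2 ^ (n + 1)) → R}
    (h₀ : pow2Half 0 v = 0) (h₁ : pow2Half 1 v = 0) : v = 0 := by
  funext k
  obtain ⟨⟨b, j⟩, rfl⟩ := (pow2Equiv n).surjective k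
  fin_cases b
  exacts [congrFun h₀ j, congrFun h₁ j]

theorem hammingNorm_eq_add_pow2Half {β : Type*} [Zero β] [DecidableEq β]
    (v : Fin (2 ^ (n + 1)) → β) :
    hammingNorm v = hammingNorm (pow2Half 0 v) + hammingNorm (pow2Half 1 v) := by
  rw [← hammingNorm_comp_equiv v (pow2Equiv n), hammingNorm_prod_eq_sum, Fin.sum_univ_two]
  rfl

theorem vecMul_G2pow_succ_apply (u : Fin (2 ^ (n + 1)) → ZMod 2) (c : Fin 2) (j : Fin (2 ^ n)) :
    (u ᵥ* G2pow (n + 1)) (pow2Equiv n (c, j)) = ∑ b, G2 b c * (pow2Half b u ᵥ* G2pow n) j := by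
  simp only [vecMul, dotProduct, ← (pow2Equiv n).sum_comp, Fintype.sum_prod_type,
    G2pow_succ_apply, Finset.mul_sum, pow2Half]
  refine Finset.sum_congr rfl fun b _ => Finset.sum_congr rfl fun i _ => ?_
  ring

theorem pow2Half_zero_vecMul_G2pow_succ (u : Fin (2 ^ (n + 1)) → ZMod 2) :
    pow2Half 0 (u ᵥ* G2pow (n + 1)) = (pow2Half 0 u + pow2Half 1 u) ᵥ* G2pow n := by
  funext j
  simp [pow2Half, vecMul_G2pow_succ_apply, add_vecMul, G2]

theorem pow2Half_one_vecMul_G2pow_succ (u : Fin (2 ^ (n + 1)) → ZMod 2) :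
    pow2Half 1 (u ᵥ* G2pow (n + 1)) = pow2Half 1 u ᵥ* G2pow n := by
  funext j
  simp [pow2Half, vecMul_G2pow_succ_apply, G2]

theorem exists_two_pow_wt_le_hammingNorm_vecMul_G2pow (u : Fin (2 ^ n) → ZMod 2) (hu : u ≠ 0) :
    ∃ i, u i ≠ 0 ∧ 2 ^ wt i ≤ hammingNorm (u ᵥ* G2pow n) := by
  induction n with
  | zero =>
    have h0 : u 0 ≠ 0 := fun h => hu (funext fun j => by rwa [Fin.fin_one_eq_zero j])
    refine ⟨0, h0, ?_⟩
    rw [G2pow, vecMul_one]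
    exact hammingNorm_pos_iff.mpr hu
  | succ n ih =>
    set u₀ := pow2Half 0 u
    set u₁ := pow2Half 1 u
    have hweight : hammingNorm (u ᵥ* G2pow (n + 1)) =
        hammingNorm ((u₀ + u₁) ᵥ* G2pow n) + hammingNorm (u₁ ᵥ* G2pow n) := by
      rw [hammingNorm_eq_add_pow2Half, pow2Half_zero_vecMul_G2pow_succ,
        pow2Half_one_vecMul_G2pow_succ]
    by_cases h₀ : u₀ = 0
    · have h₁ : u₁ ≠ 0 := fun h₁ => hu (eq_zero_of_pow2Half_eq_zero h₀ h₁)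
      obtain ⟨i, hi, hle⟩ := ih u₁ h₁
      refine ⟨pow2Equiv n (1, i), hi, ?_⟩
      rw [wt_pow2Equiv, Fin.val_one, pow_succ, hweight, h₀, zero_add, mul_two]
      exact add_le_add hle hle
    · obtain ⟨i, hi, hle⟩ := ih u₀ h₀
      refine ⟨pow2Equiv n (0, i), hi, ?_⟩
      calc 2 ^ wt (pow2Equiv n (0, i)) = 2 ^ wt i := by rw [wt_pow2Equiv, Fin.val_zero, add_zero]
        _ ≤ hammingNorm (u₀ ᵥ* G2pow n) := hle
        _ = hammingNorm ((u₀ + u₁) ᵥ* G2pow n + u₁ ᵥ* G2pow n) := by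
          rw [← add_vecMul, add_assoc, CharTwo.add_self_eq_zero, add_zero]
        _ ≤ _ := hweight ▸ hammingNorm_add_le _ _

end PolarTransform

theorem polar_min_distance (n : ℕ) (I : Finset (Fin (2^n))) (hI : I.Nonempty) :
    IsLeast {w : ℕ | ∃ u : Fin (2^n) → ZMod 2,
        (∀ i, i ∉ I → u i = 0) ∧ Matrix.vecMul u (G2pow n) ≠ 0 ∧
        w = hw (Matrix.vecMul u (G2pow n))}
      (I.inf' hI (fun i => 2 ^ wt (i : ℕ))) := by
  simp only [hw_eq_hammingNorm]
  obtain ⟨i₀, hi₀, hmin⟩ := I.exists_mem_eq_inf' hI fun i => 2 ^ wt (i : ℕ)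
  refine ⟨⟨Pi.single i₀ 1, fun i hi => Pi.single_eq_of_ne (ne_of_mem_of_not_mem hi₀ hi).symm 1,
    ?_, ?_⟩, ?_⟩
  · rw [single_one_vecMul, ← hammingNorm_ne_zero_iff]
    exact (hammingNorm_G2pow i₀).trans_ne (pow_ne_zero _ two_ne_zero)
  · rw [single_one_vecMul, hmin]
    exact (hammingNorm_G2pow i₀).symm
  · rintro w ⟨u, hsupp, hne, rfl⟩
    obtain ⟨i, hi, hle⟩ := exists_two_pow_wt_le_hammingNorm_vecMul_G2pow u
      fun hu => hne (by rw [hu, zero_vecMul])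
    exact (I.inf'_le _ (not_imp_comm.mp (hsupp i) hi)).trans hle
end

section
/- Fix R > 0. For all sufficiently large n, any subset I ⊆ {0,...,2^n−1} with |I| ≥ 2^n·R contains an index i with wt(i) ≤ n/2 + c·√n, for some constant c depending only on R. Consequently, any polar code of length 2^n and rate at least R has minimum distance at most 2^{n/2 + c√n}. -/
/-!
Over `{0, …, 2^n - 1}` the bits are independent fair coins, so `2 wt i - n` has mean `0` and
variance `n`; exactly, `∑ (2 wt i - n)² = n 2^n`. Averaging this over a set `I` of at least
`R 2^n` indices gives some `i ∈ I` with `(2 wt i - n)² ≤ n / R`, that is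
`wt i ≤ n / 2 + √n / (2 √R)`.
-/

open Finset

lemma wt_eq_wt_div_two_add_mod_two (i : ℕ) : wt i = wt (i / 2) + i % 2 := by
  rcases Nat.eq_zero_or_pos i with rfl | hi
  · simp [wt]
  · rw [wt, Nat.digits_def' one_lt_two hi, List.count_cons]
    rcases Nat.mod_two_eq_zero_or_one i with h | h <;> simp [h, wt]

lemma wt_two_pow_add {n i : ℕ} (hi : i < 2 ^ n) : wt (2 ^ n + i) = wt i + 1 := by
  induction n generalizing i with
  | zero =>
    obtain rfl : i = 0 := by omega
    simp [wt]
  | succ n ih =>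
    have hdiv : (2 ^ (n + 1) + i) / 2 = 2 ^ n + i / 2 := by omega
    have hmod : (2 ^ (n + 1) + i) % 2 = i % 2 := by omega
    rw [wt_eq_wt_div_two_add_mod_two (2 ^ (n + 1) + i), hdiv, hmod, ih (by omega),
      wt_eq_wt_div_two_add_mod_two i]
    omega

lemma sum_range_two_pow_sq_two_mul_wt_sub (R : Type*) [CommRing R] (n : ℕ) :
    ∑ i ∈ range (2 ^ n), (2 * (wt i : R) - n) ^ 2 = (n : R) * 2 ^ n := by
  induction n with
  | zero => simp [wt]
  | succ n ih =>
    have upper : ∀ i ∈ range (2 ^ n), (2 * (wt (2 ^ n + i) : R) - ↑(n + 1)) ^ 2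
        = (2 * (wt i : R) - n) ^ 2 + 2 * (2 * (wt i : R) - n) + 1 := by
      intro i hi
      rw [wt_two_pow_add (mem_range.mp hi)]
      push_cast
      ring
    have lower : ∀ i ∈ range (2 ^ n), (2 * (wt i : R) - ↑(n + 1)) ^ 2
        = (2 * (wt i : R) - n) ^ 2 - 2 * (2 * (wt i : R) - n) + 1 := by
      intro i _
      push_cast
      ring
    rw [pow_succ, mul_two, sum_range_add, sum_congr rfl upper, sum_congr rfl lower]
    simp only [sum_add_distrib, sum_sub_distrib, sum_const, card_range, ih, nsmul_eq_mul]
    push_cast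
    ring

lemma exists_mem_sq_two_mul_wt_sub_le {n : ℕ} {I : Finset ℕ} (hI : I ⊆ range (2 ^ n))
    (hne : I.Nonempty) : ∃ i ∈ I, (2 * (wt i : ℝ) - n) ^ 2 ≤ n * 2 ^ n / #I := by
  apply exists_le_of_sum_le hne
  calc ∑ i ∈ I, (2 * (wt i : ℝ) - n) ^ 2
      ≤ ∑ i ∈ range (2 ^ n), (2 * (wt i : ℝ) - n) ^ 2 :=
        sum_le_sum_of_subset_of_nonneg hI fun _ _ _ ↦ sq_nonneg _
    _ = ∑ _ ∈ I, (n : ℝ) * 2 ^ n / #I := by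
        rw [sum_range_two_pow_sq_two_mul_wt_sub, sum_const, nsmul_eq_mul,
          mul_div_cancel₀ _ (Nat.cast_ne_zero.mpr hne.card_ne_zero)]

theorem low_weight_index_exists (R : ℝ) (hR : 0 < R) :
    ∃ c : ℝ, ∃ N₀ : ℕ, ∀ n ≥ N₀, ∀ I : Finset ℕ, I ⊆ Finset.range (2^n) →
      (2:ℝ)^n * R ≤ I.card →
      ∃ i ∈ I, (wt i : ℝ) ≤ n / 2 + c * Real.sqrt n ∧
        (2:ℝ) ^ (wt i : ℝ) ≤ (2:ℝ) ^ ((n:ℝ) / 2 + c * Real.sqrt n) := by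
  refine ⟨1 / (2 * √R), 0, fun n _ I hI hcard ↦ ?_⟩
  have hcard_pos : (0 : ℝ) < #I := lt_of_lt_of_le (by positivity) hcard
  obtain ⟨i, hiI, hi⟩ :=
    exists_mem_sq_two_mul_wt_sub_le hI (card_pos.mp (by exact_mod_cast hcard_pos))
  have hsq : (2 * (wt i : ℝ) - n) ^ 2 ≤ n / R := by
    refine hi.trans ?_
    rw [div_le_div_iff₀ hcard_pos hR]
    rw [mul_assoc]
    exact mul_le_mul_of_nonneg_left hcard n.cast_nonneg
  have hdev : 2 * (wt i : ℝ) - n ≤ √n / √R :=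
    (le_abs_self _).trans ((Real.abs_le_sqrt hsq).trans_eq (Real.sqrt_div' _ hR.le))
  have hwt : (wt i : ℝ) ≤ n / 2 + 1 / (2 * √R) * √n := by
    have : √n / √R = 2 * (1 / (2 * √R) * √n) := by field_simp
    linarith
  exact ⟨i, hiI, hwt, Real.rpow_le_rpow_of_exponent_le one_le_two hwt⟩
end
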